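/- arXiv:0704.1378 — 8 statements merged into one kernel-verified Lean document; each statement's English description precedes it below -/
import Mathlib

section
/- Let R be a commutative local ring with maximal ideal m = (2), m² = 0. Any R-linear map f : A → B between finitely generated free R-modules is equivalent, after composing with isomorphisms on source and target, to a map of the form diag(1,…,1,2,…,2,0,…,0), i.e., there exist decompositions A ≅ W ⊕ X ⊕ Y and B ≅ W ⊕ X ⊕ Z under which f corresponds to (w,x,y) ↦ (w, 2x, 0). -/
/-!
Since `m = (2)` and `m² = 0`, a nonzero `f` is either `g` or `2 • g` for some `g` having a value
`g a ∉ 2B = mB` (in the second case because `4 = 0`). Over a local ring such a vector admits a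
functional `φ` with `φ (g a) = 1`, and `φ ∘ g`, `φ` split off a copy of `R` from `A` and `B` on
which `f` is multiplication by `1` or `2`. The complements are kernels of split surjections, hence
finite projective, hence free over the local ring `R`, and induction on the rank concludes.
-/

open Module IsLocalRing LinearMap

section

variable {R : Type*} [CommRing R]

theorem IsLocalRing.exists_dual_apply_eq_one [IsLocalRing R] {ϖ : R}
    (hϖ : maximalIdeal R = Ideal.span {ϖ}) {M : Type*} [AddCommGroup M] [Module R M]
    [Module.Free R M] [Module.Finite R M] {b : M} (hb : ¬∃ y, b = ϖ • y) :
    ∃ φ : M →ₗ[R] R, φ b = 1 := by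
  classical
  by_contra! hφ
  let 𝒷 := Module.Free.chooseBasis R M
  have hcoord : ∀ i, 𝒷.repr b i ∈ Ideal.span {ϖ} := fun i => hϖ ▸ (mem_maximalIdeal _).2
    fun hu => hφ (hu.unit⁻¹ • 𝒷.coord i) (by simp [Units.smul_def])
  choose c hc using fun i => Ideal.mem_span_singleton'.mp (hcoord i)
  refine hb ⟨∑ i, c i • 𝒷 i, ?_⟩
  conv_lhs => rw [← 𝒷.sum_repr b]
  simp only [Finset.smul_sum, smul_smul, ← hc, mul_comm]

theorem LinearMap.exists_eq_smul_of_forall_exists_eq_smul {A B : Type*} [AddCommGroup A]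
    [Module R A] [Module.Free R A] [AddCommGroup B] [Module R B] (c : R) (f : A →ₗ[R] B)
    (h : ∀ x, ∃ y, f x = c • y) : ∃ g : A →ₗ[R] B, f = c • g := by
  let 𝒷 := Module.Free.chooseBasis R A
  choose y hy using fun i => h (𝒷 i)
  exact ⟨𝒷.constr R y, 𝒷.ext fun i => by simp [hy]⟩

section ProjKer

variable {M : Type*} [AddCommGroup M] [Module R M] (φ : M →ₗ[R] R) {b : M} (hb : φ b = 1)
include hb

def LinearMap.projKer : M →ₗ[R] ker φ :=
  codRestrict (ker φ) (id - φ.smulRight b) fun x => by simp [hb]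

theorem LinearMap.projKer_apply_coe (x : M) : (φ.projKer hb x : M) = x - φ x • b := rfl

theorem LinearMap.projKer_apply_of_mem (x : ker φ) : φ.projKer hb x = x :=
  Subtype.ext <| by simp [projKer_apply_coe, mem_ker.mp x.2]

noncomputable def LinearMap.equivProdKer : M ≃ₗ[R] R × ker φ :=
  equivProdOfSurjectiveOfIsCompl φ (φ.projKer hb)
    (range_eq_top.mpr fun r => ⟨r • b, by simp [hb]⟩)
    (range_eq_of_proj (φ.projKer_apply_of_mem hb))
    (isCompl_of_proj (φ.projKer_apply_of_mem hb))

theorem LinearMap.equivProdKer_apply (x : M) : φ.equivProdKer hb x = (φ x, φ.projKer hb x) :=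
  rfl

theorem LinearMap.finite_ker [Module.Finite R M] : Module.Finite R (ker φ) :=
  Module.Finite.of_surjective _ (range_eq_top.mp (range_eq_of_proj (φ.projKer_apply_of_mem hb)))

theorem LinearMap.free_ker [IsLocalRing R] [Module.Free R M] [Module.Finite R M] :
    Module.Free R (ker φ) :=
  have := φ.finite_ker hb
  have : Module.Projective R (ker φ) :=
    .of_split (ker φ).subtype (φ.projKer hb) (LinearMap.ext (φ.projKer_apply_of_mem hb))
  free_of_flat_of_isLocalRing

theorem LinearMap.finrank_ker_add_one [IsLocalRing R] [Module.Free R M] [Module.Finite R M] :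
    finrank R (ker φ) + 1 = finrank R M := by
  have := φ.finite_ker hb
  have := φ.free_ker hb
  rw [(φ.equivProdKer hb).finrank_eq, finrank_prod, finrank_self, add_comm]

end ProjKer

section NormalForm

variable {A B A' B' X Y : Type*} [AddCommGroup A] [Module R A] [AddCommGroup B] [Module R B]
  [AddCommGroup A'] [Module R A'] [AddCommGroup B'] [Module R B']
  [AddCommGroup X] [Module R X] [AddCommGroup Y] [Module R Y]

def LinearMap.HasOneTwoZeroForm (f : A →ₗ[R] B) : Prop :=
  ∃ (p q r s : ℕ) (eA : A ≃ₗ[R] (Fin p → R) × (Fin q → R) × (Fin r → R))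
    (eB : B ≃ₗ[R] (Fin p → R) × (Fin q → R) × (Fin s → R)),
    ∀ a : A, eB (f a) = ((eA a).1, (2 : R) • (eA a).2.1, 0)

theorem LinearMap.hasOneTwoZeroForm_zero [Module.Free R A] [Module.Finite R A]
    [Module.Free R B] [Module.Finite R B] : (0 : A →ₗ[R] B).HasOneTwoZeroForm := by
  refine ⟨0, 0, _, _, ((Module.Free.chooseBasis R A).reindex (Fintype.equivFin _)).equivFun.trans
      (LinearEquiv.uniqueProd.trans LinearEquiv.uniqueProd).symm,
    ((Module.Free.chooseBasis R B).reindex (Fintype.equivFin _)).equivFun.trans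
      (LinearEquiv.uniqueProd.trans LinearEquiv.uniqueProd).symm, fun a => ?_⟩
  simp only [zero_apply, map_zero]
  exact Prod.ext (Subsingleton.elim _ _) (Prod.ext (Subsingleton.elim _ _) rfl)

variable (R X) in
def LinearEquiv.vecConsFst (n : ℕ) : (R × (Fin n → R) × X) ≃ₗ[R] (Fin (n + 1) → R) × X :=
  (prodAssoc R R (Fin n → R) X).symm.trans
    ((Fin.consLinearEquiv R fun _ : Fin (n + 1) => R).prodCongr (.refl R X))

@[simp]
theorem LinearEquiv.vecConsFst_apply (n : ℕ) (t : R) (v : (Fin n → R) × X) :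
    vecConsFst R X n (t, v) = (Matrix.vecCons t v.1, v.2) :=
  rfl

variable (R X Y) in
def LinearEquiv.vecConsSnd (n : ℕ) :
    (R × Y × (Fin n → R) × X) ≃ₗ[R] Y × (Fin (n + 1) → R) × X :=
  (prodAssoc R R Y _).symm.trans (((prodComm R R Y).prodCongr (.refl R _)).trans
    ((prodAssoc R Y R _).trans ((LinearEquiv.refl R Y).prodCongr (vecConsFst R X n))))

@[simp]
theorem LinearEquiv.vecConsSnd_apply (n : ℕ) (t : R) (v : Y × (Fin n → R) × X) :
    vecConsSnd R X Y n (t, v) = (v.1, Matrix.vecCons t v.2.1, v.2.2) :=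
  rfl

theorem LinearMap.HasOneTwoZeroForm.of_equiv_prod {f' : A' →ₗ[R] B'} (h : f'.HasOneTwoZeroForm)
    {d : R} (hd : d = 1 ∨ d = 2) {f : A →ₗ[R] B} (eA : A ≃ₗ[R] R × A') (eB : B ≃ₗ[R] R × B')
    (hf : ∀ x, eB (f x) = (d * (eA x).1, f' (eA x).2)) : f.HasOneTwoZeroForm := by
  obtain ⟨p, q, r, s, eA', eB', h'⟩ := h
  rcases hd with rfl | rfl
  · refine ⟨p + 1, q, r, s,
      eA.trans (((LinearEquiv.refl R R).prodCongr eA').trans (.vecConsFst R _ p)),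
      eB.trans (((LinearEquiv.refl R R).prodCongr eB').trans (.vecConsFst R _ p)), fun x => ?_⟩
    simp [hf, h']
  · refine ⟨p, q + 1, r, s,
      eA.trans (((LinearEquiv.refl R R).prodCongr eA').trans (.vecConsSnd R _ _ q)),
      eB.trans (((LinearEquiv.refl R R).prodCongr eB').trans (.vecConsSnd R _ _ q)), fun x => ?_⟩
    simp [hf, h']

theorem LinearMap.hasOneTwoZeroForm_smul_of_restrict {d : R} (hd : d = 1 ∨ d = 2)
    (g : A →ₗ[R] B) (φ : B →ₗ[R] R) {a : A} (ha : φ (g a) = 1) {f' : ker (φ ∘ₗ g) →ₗ[R] ker φ}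
    (hf' : ∀ x, (f' x : B) = d • g x) (h : f'.HasOneTwoZeroForm) :
    (d • g).HasOneTwoZeroForm := by
  refine h.of_equiv_prod hd ((φ ∘ₗ g).equivProdKer ha) (φ.equivProdKer ha) fun x => ?_
  simp only [equivProdKer_apply]
  refine Prod.ext (by simp) (Subtype.ext ?_)
  simp [projKer_apply_coe, hf', smul_sub, smul_smul]

end NormalForm

section TwoSquareZero

variable [IsLocalRing R] {A B : Type*} [AddCommGroup A] [Module R A] [AddCommGroup B] [Module R B]

theorem LinearMap.exists_eq_smul_of_ne_zero (hm : maximalIdeal R = Ideal.span {(2 : R)})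
    (hsq : maximalIdeal R ^ 2 = ⊥) [Module.Free R A] {f : A →ₗ[R] B} (hf : f ≠ 0) :
    ∃ (d : R) (g : A →ₗ[R] B) (a : A), (d = 1 ∨ d = 2) ∧ f = d • g ∧ ¬∃ y, g a = (2 : R) • y := by
  by_cases hdiv : ∀ x, ∃ y, f x = (2 : R) • y
  · obtain ⟨g, rfl⟩ := f.exists_eq_smul_of_forall_exists_eq_smul 2 hdiv
    obtain ⟨a, ha⟩ : ∃ a, ((2 : R) • g) a ≠ 0 := not_forall.mp fun h => hf (LinearMap.ext h)
    have h4 := Ideal.pow_mem_pow (hm ▸ Ideal.mem_span_singleton_self (2 : R)) 2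
    rw [hsq, Ideal.mem_bot] at h4
    refine ⟨2, g, a, Or.inr rfl, rfl, fun ⟨y, hy⟩ => ha ?_⟩
    rw [smul_apply, hy, smul_smul, ← sq, h4, zero_smul]
  · obtain ⟨a, ha⟩ := not_forall.mp hdiv
    exact ⟨1, f, a, Or.inl rfl, (one_smul R f).symm, ha⟩

theorem LinearMap.hasOneTwoZeroForm (hm : maximalIdeal R = Ideal.span {(2 : R)})
    (hsq : maximalIdeal R ^ 2 = ⊥) [Module.Free R A] [Module.Finite R A] [Module.Free R B]
    [Module.Finite R B] (f : A →ₗ[R] B) : f.HasOneTwoZeroForm := by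
  induction hn : finrank R A using Nat.strong_induction_on generalizing A B with
  | _ n ih =>
  by_cases hf : f = 0
  · exact hf ▸ hasOneTwoZeroForm_zero
  obtain ⟨d, g, a, hd, rfl, hga⟩ := exists_eq_smul_of_ne_zero hm hsq hf
  obtain ⟨φ, hφ⟩ := exists_dual_apply_eq_one hm hga
  have := (φ ∘ₗ g).finite_ker hφ
  have := (φ ∘ₗ g).free_ker hφ
  have := φ.finite_ker hφ
  have := φ.free_ker hφ
  have hrank := (φ ∘ₗ g).finrank_ker_add_one hφ
  exact hasOneTwoZeroForm_smul_of_restrict hd g φ hφ (fun _ => rfl)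
    (ih _ (by omega) ((d • g).restrict fun x hx => by simp_all) rfl)

end TwoSquareZero

end

theorem stmt_2_general (R : Type*) [CommRing R] [IsLocalRing R]
    (hm : IsLocalRing.maximalIdeal R = Ideal.span {(2 : R)})
    (hsq : IsLocalRing.maximalIdeal R ^ 2 = ⊥)
    (A B : Type*) [AddCommGroup A] [Module R A] [Module.Free R A] [Module.Finite R A]
    [AddCommGroup B] [Module R B] [Module.Free R B] [Module.Finite R B]
    (f : A →ₗ[R] B) :
    ∃ (p q r s : ℕ)
      (eA : A ≃ₗ[R] (Fin p → R) × (Fin q → R) × (Fin r → R))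
      (eB : B ≃ₗ[R] (Fin p → R) × (Fin q → R) × (Fin s → R)),
      ∀ a : A, eB (f a) = ((eA a).1, (2 : R) • (eA a).2.1, 0) :=
  f.hasOneTwoZeroForm hm hsq

/-- Over a commutative local ring `R` with `m = (2)`, `m² = 0`, any `R`-linear map between
finitely generated free modules is, after composing with isomorphisms on source and target,
of the form `diag(1,…,1,2,…,2,0,…,0)`: there are decompositions `A ≅ W ⊕ X ⊕ Y` and
`B ≅ W ⊕ X ⊕ Z` under which `f` corresponds to `(w, x, y) ↦ (w, 2 • x, 0)`. -/
theorem stmt_2 (R : Type*) [CommRing R] [IsLocalRing R]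
    (hm : IsLocalRing.maximalIdeal R = Ideal.span {(2 : R)})
    (hne : IsLocalRing.maximalIdeal R ≠ ⊥)
    (hsq : IsLocalRing.maximalIdeal R ^ 2 = ⊥)
    (A B : Type*) [AddCommGroup A] [Module R A] [Module.Free R A] [Module.Finite R A]
    [AddCommGroup B] [Module R B] [Module.Free R B] [Module.Finite R B]
    (f : A →ₗ[R] B) :
    ∃ (p q r s : ℕ)
      (eA : A ≃ₗ[R] (Fin p → R) × (Fin q → R) × (Fin r → R))
      (eB : B ≃ₗ[R] (Fin p → R) × (Fin q → R) × (Fin s → R)),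
      ∀ a : A, eB (f a) = ((eA a).1, (2 : R) • (eA a).2.1, 0) :=
  stmt_2_general R hm hsq A B f
end

section
/- Over R = Z/4, any R-linear endomorphism f : R^n → R^n can be written, up to pre- and post-composition with isomorphisms, as a block diagonal matrix diag(I, 2I', 0), where I and I' are identity matrices of appropriate sizes. -/
/-!
When the principal ideals of `R` form a chain, as they do in `ℤ/4` (`0 ⊂ (2) ⊂ ℤ/4`), Smith
normal form needs no Euclidean steps: some entry divides all the others, so after moving it to
the corner it clears its row and column by elementary operations. Induction on the size gives
`f ~ diag(d₀, …, dₙ₋₁)` with `d₀ ∣ d₁ ∣ ⋯`. Over `ℤ/4` every `dᵢ` is associated to `1`, `2`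
or `0`, and the divisibility chain forces these values to occur in this order.
-/

open Finset

theorem PreValuationRing.exists_dvd_forall {R : Type*} [CommRing R] [PreValuationRing R]
    {ι : Type*} [Finite ι] [Nonempty ι] (g : ι → R) : ∃ i, ∀ j, g i ∣ g j := by
  classical
  have := PreValuationRing.iff_ideal_total.mp ‹_›
  let := Lattice.toLinearOrder (Ideal R)
  obtain ⟨i, hi⟩ := Finite.exists_max fun i => Ideal.span {g i}
  exact ⟨i, fun j => Ideal.span_singleton_le_span_singleton.mp (hi j)⟩

namespace Matrix

variable {R : Type*} [CommRing R]

section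

variable {n : Type*} [Fintype n] [DecidableEq n]

def Equivalent (f g : Matrix n n R) : Prop :=
  ∃ u v : GL n R, (u : Matrix n n R) * f * (v : Matrix n n R) = g

namespace Equivalent

@[refl] theorem refl (f : Matrix n n R) : Equivalent f f := ⟨1, 1, by simp⟩

theorem trans {f g h : Matrix n n R} (hfg : Equivalent f g) (hgh : Equivalent g h) :
    Equivalent f h := by
  obtain ⟨u, v, rfl⟩ := hfg
  obtain ⟨u', v', rfl⟩ := hgh
  exact ⟨u' * u, v * v', by simp only [Units.val_mul, Matrix.mul_assoc]⟩

theorem of_isUnit (f : Matrix n n R) {u v : Matrix n n R} (hu : IsUnit u) (hv : IsUnit v) :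
    Equivalent f (u * f * v) :=
  ⟨hu.unit, hv.unit, rfl⟩

theorem dvd {a : R} {f g : Matrix n n R} (h : Equivalent f g) (hf : ∀ i j, a ∣ f i j)
    (i j : n) : a ∣ g i j := by
  obtain ⟨u, v, rfl⟩ := h
  simp only [mul_apply]
  exact dvd_sum fun k _ => (dvd_sum fun l _ => (hf l k).mul_left _).mul_right _

end Equivalent

theorem isUnit_permMatrix (σ : Equiv.Perm n) : IsUnit (σ.permMatrix R) := by
  rw [isUnit_iff_isUnit_det, det_permutation]
  exact (Equiv.Perm.sign σ).isUnit.map (Int.castRingHom R)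

theorem equivalent_submatrix (f : Matrix n n R) (σ τ : Equiv.Perm n) :
    Equivalent f (f.submatrix σ τ) := by
  have := Equivalent.of_isUnit f (isUnit_permMatrix σ) (isUnit_permMatrix τ.symm)
  rwa [PEquiv.toMatrix_toPEquiv_mul, PEquiv.mul_toMatrix_toPEquiv, submatrix_submatrix] at this

theorem isUnit_one_sub_vecMulVec {x y : n → R} (hxy : y ⬝ᵥ x = 0) :
    IsUnit (1 - vecMulVec x y) :=
  IsNilpotent.isUnit_one_sub
    ⟨2, by rw [sq, vecMulVec_mul_vecMulVec, hxy, zero_smul, vecMulVec_zero]⟩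

theorem equivalent_diagonal_of_associated {d e : n → R} (h : ∀ i, Associated (d i) (e i)) :
    Equivalent (diagonal d) (diagonal e) := by
  choose u hu using h
  have := Equivalent.of_isUnit (diagonal d) isUnit_one
    (isUnit_diagonal.2 (Pi.isUnit_iff.2 fun i => (u i).isUnit))
  rwa [one_mul, diagonal_mul_diagonal, funext hu] at this

end

section

variable {m : ℕ}

def diagCons (a : R) (w : Matrix (Fin m) (Fin m) R) : Matrix (Fin (m + 1)) (Fin (m + 1)) R :=
  of (Fin.cons (Fin.cons a 0) fun i => Fin.cons 0 (w i))

variable (a : R) (w : Matrix (Fin m) (Fin m) R)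

@[simp] theorem diagCons_zero_zero : diagCons a w 0 0 = a := rfl
@[simp] theorem diagCons_zero_succ (j : Fin m) : diagCons a w 0 j.succ = 0 := rfl
@[simp] theorem diagCons_succ_zero (i : Fin m) : diagCons a w i.succ 0 = 0 := rfl
@[simp] theorem diagCons_succ_succ (i j : Fin m) : diagCons a w i.succ j.succ = w i j := rfl

theorem diagCons_mul (b : R) (w' : Matrix (Fin m) (Fin m) R) :
    diagCons a w * diagCons b w' = diagCons (a * b) (w * w') := by
  ext i j
  cases i using Fin.cases <;> cases j using Fin.cases <;> simp [mul_apply, Fin.sum_univ_succ]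

@[simp] theorem diagCons_one : diagCons 1 (1 : Matrix (Fin m) (Fin m) R) = 1 := by
  ext i j
  cases i using Fin.cases <;> cases j using Fin.cases <;>
    simp [one_apply, eq_comm (a := (0 : Fin (m + 1)))]

theorem diagCons_diagonal (d : Fin m → R) :
    diagCons a (diagonal d) = diagonal (Fin.cons a d) := by
  ext i j
  cases i using Fin.cases <;> cases j using Fin.cases <;>
    simp [diagonal_apply, eq_comm (a := (0 : Fin (m + 1)))]

theorem Equivalent.diagCons {B C : Matrix (Fin m) (Fin m) R} (h : Equivalent B C) :
    Equivalent (diagCons a B) (diagCons a C) := by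
  obtain ⟨u, v, rfl⟩ := h
  have hunit (w : GL (Fin m) R) : IsUnit (Matrix.diagCons 1 (w : Matrix (Fin m) (Fin m) R)) :=
    ⟨⟨Matrix.diagCons 1 ↑w, Matrix.diagCons 1 ↑w⁻¹, by simp [diagCons_mul],
      by simp [diagCons_mul]⟩, rfl⟩
  simpa [diagCons_mul] using Equivalent.of_isUnit (Matrix.diagCons a B) (hunit u) (hunit v)

end

theorem exists_equivalent_diagCons {m : ℕ} (f : Matrix (Fin (m + 1)) (Fin (m + 1)) R)
    (hf : ∀ i j, f 0 0 ∣ f i j) : ∃ B, Equivalent f (diagCons (f 0 0) B) := by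
  choose c hc using fun i : Fin m => hf i.succ 0
  choose d hd using fun j : Fin m => hf 0 j.succ
  have hL := isUnit_one_sub_vecMulVec (x := Fin.cons 0 c) (y := Pi.single 0 1) (by simp)
  have hR := isUnit_one_sub_vecMulVec (x := Pi.single 0 1) (y := Fin.cons 0 d) (by simp)
  -- subtract `c i` times row `0` from row `i + 1`, and `d j` times column `0` from column `j + 1`
  set g := (1 - vecMulVec (Fin.cons 0 c) (Pi.single 0 1)) * f *
    (1 - vecMulVec (Pi.single 0 1) (Fin.cons 0 d))
  have hg : g = diagCons (f 0 0) (g.submatrix Fin.succ Fin.succ) := by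
    ext i j
    cases i using Fin.cases <;> cases j using Fin.cases <;>
      simp [g, sub_mul, mul_sub, vecMulVec_mul, mul_vecMulVec, vecMulVec_apply, hc, hd,
        mul_comm (c _)]
  exact ⟨g.submatrix Fin.succ Fin.succ, by rw [← hg]; exact Equivalent.of_isUnit f hL hR⟩

theorem exists_equivalent_diagonal [PreValuationRing R] {n : ℕ} (f : Matrix (Fin n) (Fin n) R) :
    ∃ d : Fin n → R, (∀ i j, i ≤ j → d i ∣ d j) ∧ Equivalent f (diagonal d) := by
  induction n with
  | zero => exact ⟨0, fun i => i.elim0, by rw [Subsingleton.elim f (diagonal 0)]⟩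
  | succ m ih =>
    obtain ⟨⟨i₀, j₀⟩, hpiv⟩ :=
      PreValuationRing.exists_dvd_forall fun p : Fin (m + 1) × Fin (m + 1) => f p.1 p.2
    set f' := f.submatrix (Equiv.swap 0 i₀) (Equiv.swap 0 j₀)
    have hpiv' (i j) : f' 0 0 ∣ f' i j := by simpa [f'] using hpiv (_, _)
    obtain ⟨B, hB⟩ := exists_equivalent_diagCons f' hpiv'
    obtain ⟨d, hd, hBd⟩ := ih B
    have hdvd (j : Fin m) : f' 0 0 ∣ d j := by
      have hBdvd (i j : Fin m) : f' 0 0 ∣ B i j := by simpa using hB.dvd hpiv' i.succ j.succ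
      simpa using hBd.dvd hBdvd j j
    refine ⟨Fin.cons (f' 0 0) d, ?_, (equivalent_submatrix f _ _).trans (hB.trans ?_)⟩
    · intro i j hij
      cases i using Fin.cases <;> cases j using Fin.cases
      · exact dvd_rfl
      · exact hdvd _
      · exact absurd hij (by simp)
      · exact hd _ _ (by simpa using hij)
    · rw [← diagCons_diagonal]
      exact hBd.diagCons _

end Matrix

theorem Fin.lt_card_filter_iff_of_antitone {n : ℕ} {P : Fin n → Prop} [DecidablePred P]
    (hP : Antitone P) (i : Fin n) : (i : ℕ) < #{j | P j} ↔ P i := by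
  refine ⟨fun hi => ?_, fun hi => ?_⟩
  · by_contra hPi
    have : univ.filter P ⊆ Iio i := fun j hj => by
      simp only [mem_filter, mem_univ, true_and, mem_Iio] at hj ⊢
      exact lt_of_not_ge fun hij => hPi (hP hij hj)
    exact (card_le_card this).not_gt (by simpa using hi)
  · have : Iic i ⊆ univ.filter P := fun j hj => by
      simp only [mem_filter, mem_univ, true_and, mem_Iic] at hj ⊢
      exact hP hj hi
    simpa using card_le_card this

namespace ZMod

instance : PreValuationRing (ZMod 4) := ⟨by decide⟩

theorem eq_two_of_not_isUnit_of_ne_zero {x : ZMod 4} (hu : ¬IsUnit x) (h0 : x ≠ 0) : x = 2 := by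
  fin_cases x
  · exact absurd rfl h0
  · exact absurd isUnit_one hu
  · rfl
  · exact absurd (IsUnit.of_mul_eq_one (3 : ZMod 4) rfl) hu

theorem exists_associated_pattern {n : ℕ} {d : Fin n → ZMod 4}
    (hd : ∀ i j, i ≤ j → d i ∣ d j) :
    ∃ p q, p + q ≤ n ∧ ∀ i : Fin n,
      Associated (d i) (if (i : ℕ) < p then 1 else if (i : ℕ) < p + q then 2 else 0) := by
  classical
  have : Fact (1 < 4) := ⟨by norm_num⟩
  have hunit := Fin.lt_card_filter_iff_of_antitone (P := fun i => IsUnit (d i))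
    fun i j hij hj => isUnit_of_dvd_unit (hd i j hij) hj
  have hne := Fin.lt_card_filter_iff_of_antitone (P := fun i => d i ≠ 0)
    fun i j hij hj hi => hj (zero_dvd_iff.mp (hi ▸ hd i j hij))
  set p := #{i | IsUnit (d i)}
  set r := #{i | d i ≠ 0}
  have hpr : p ≤ r := card_le_card fun i => by simpa using IsUnit.ne_zero
  refine ⟨p, r - p, ?_, fun i => ?_⟩ <;> rw [Nat.add_sub_of_le hpr]
  · exact (card_filter_le _ _).trans_eq (card_fin n)
  · split_ifs with hp hr
    · exact associated_one_iff_isUnit.mpr ((hunit i).mp hp)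
    · rw [eq_two_of_not_isUnit_of_ne_zero (mt (hunit i).mpr hp) ((hne i).mp hr)]
    · exact (associated_zero_iff_eq_zero _).mpr (not_not.mp (mt (hne i).mpr hr))

end ZMod

/-- Over `R = ℤ/4`, any square matrix can be written, up to pre- and post-composition with
invertible matrices, as a block diagonal matrix `diag(I, 2·I', 0)`. -/
theorem stmt_3 (n : ℕ) (f : Matrix (Fin n) (Fin n) (ZMod 4)) :
    ∃ (p q : ℕ), p + q ≤ n ∧
      ∃ u v : GL (Fin n) (ZMod 4),
        (u : Matrix (Fin n) (Fin n) (ZMod 4)) * f * (v : Matrix (Fin n) (Fin n) (ZMod 4)) =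
          Matrix.of (fun i j : Fin n =>
            if i = j then
              (if (i : ℕ) < p then 1 else if (i : ℕ) < p + q then 2 else 0)
            else 0) := by
  obtain ⟨d, hd, hfd⟩ := Matrix.exists_equivalent_diagonal f
  obtain ⟨p, q, hpq, hassoc⟩ := ZMod.exists_associated_pattern hd
  obtain ⟨u, v, huv⟩ := hfd.trans (Matrix.equivalent_diagonal_of_associated hassoc)
  exact ⟨p, q, hpq, u, v, huv⟩
end

section
/- Let R be a commutative local ring with m = (2) ≠ 0, m² = 0. Then R is self-injective: R is injective as a module over itself. -/
/-!
The ideals of `R` are `0`, `𝔪 = (2)` and `R`, so `R` is a principal ideal ring, and each ideal is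
its own double annihilator: `ann 𝔪 = 𝔪` because `𝔪² = 0` while `𝔪 ≠ 0`. In a principal ideal ring
Baer's criterion for a map `g : (s) → R` asks for `g s ∈ (s)`, and `g s` is always killed by
`ann (s)`, hence lies in `ann (ann (s)) = (s)`.
-/

open IsLocalRing Submodule

section DoubleAnnihilator

variable {R : Type*} [CommRing R]

theorem apply_mem_annihilator_annihilator_span_singleton (s : R) (g : Ideal.span {s} →ₗ[R] R) :
    g ⟨s, Ideal.mem_span_singleton_self s⟩ ∈ (Ideal.span {s}).annihilator.annihilator := by
  refine mem_annihilator.mpr fun r hr => ?_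
  rw [Ideal.span, mem_annihilator_span_singleton] at hr
  rw [smul_eq_mul, mul_comm, ← smul_eq_mul, ← map_smul,
    show r • (⟨s, _⟩ : Ideal.span {s}) = 0 from Subtype.ext hr, map_zero]

theorem exists_extension_of_apply_mem_span_singleton {s : R} (g : Ideal.span {s} →ₗ[R] R)
    (hg : g ⟨s, Ideal.mem_span_singleton_self s⟩ ∈ Ideal.span {s}) :
    ∃ g' : R →ₗ[R] R, ∀ (x : R) (hx : x ∈ Ideal.span {s}), g' x = g ⟨x, hx⟩ := by
  obtain ⟨a, ha⟩ := Ideal.mem_span_singleton'.mp hg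
  refine ⟨LinearMap.mulLeft R a, fun x hx => ?_⟩
  obtain ⟨r, rfl⟩ := Ideal.mem_span_singleton'.mp hx
  rw [show (⟨r * s, hx⟩ : Ideal.span {s}) = r • ⟨s, Ideal.mem_span_singleton_self s⟩ from rfl,
    map_smul, smul_eq_mul, ← ha, LinearMap.mulLeft_apply]
  ring

theorem Module.Baer.self_of_annihilator_annihilator_le [IsPrincipalIdealRing R]
    (h : ∀ I : Ideal R, I.annihilator.annihilator ≤ I) : Module.Baer R R := by
  intro I g
  obtain ⟨s, rfl⟩ := IsPrincipalIdealRing.principal I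
  exact exists_extension_of_apply_mem_span_singleton g
    (h _ (apply_mem_annihilator_annihilator_span_singleton s g))

end DoubleAnnihilator

namespace IsLocalRing

variable {R : Type*} [CommRing R] [IsLocalRing R]

theorem annihilator_maximalIdeal_of_sq_eq_bot (hne : maximalIdeal R ≠ ⊥)
    (hsq : maximalIdeal R ^ 2 = ⊥) : (maximalIdeal R).annihilator = maximalIdeal R := by
  refine le_antisymm (le_maximalIdeal ?_) ?_
  · rwa [Ne, annihilator_eq_top_iff]
  · rwa [le_annihilator_iff, smul_eq_mul, ← sq]

theorem eq_bot_or_eq_maximalIdeal_or_eq_top {t : R} (hm : maximalIdeal R = Ideal.span {t})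
    (hsq : maximalIdeal R ^ 2 = ⊥) (I : Ideal R) : I = ⊥ ∨ I = maximalIdeal R ∨ I = ⊤ := by
  by_cases htop : I = ⊤
  · exact Or.inr (Or.inr htop)
  by_cases hbot : I = ⊥
  · exact Or.inl hbot
  refine Or.inr (Or.inl (le_antisymm (le_maximalIdeal htop) ?_))
  obtain ⟨x, hxI, hx0⟩ := exists_mem_ne_zero_of_ne_bot hbot
  obtain ⟨r, rfl⟩ := Ideal.mem_span_singleton'.mp (hm ▸ le_maximalIdeal htop hxI)
  have hr : IsUnit r := by
    by_contra hr
    have ht : t ∈ maximalIdeal R := hm ▸ Ideal.mem_span_singleton_self t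
    have := Ideal.mul_mem_mul (show r ∈ maximalIdeal R from hr) ht
    rw [← sq, hsq, Ideal.mem_bot] at this
    exact hx0 this
  rw [hm, Ideal.span_singleton_le_iff_mem, ← hr.unit.inv_mul_cancel_left t]
  exact Ideal.mul_mem_left _ _ hxI

end IsLocalRing

/-- Let `R` be a commutative local ring with `m = (2) ≠ 0`, `m² = 0`.  Then `R` is
self-injective: `R` is injective as a module over itself. -/
theorem stmt_4 (R : Type*) [CommRing R] [IsLocalRing R]
    (hm : IsLocalRing.maximalIdeal R = Ideal.span {(2 : R)})
    (hne : IsLocalRing.maximalIdeal R ≠ ⊥)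
    (hsq : IsLocalRing.maximalIdeal R ^ 2 = ⊥) :
    Module.Injective R R := by
  have hideals := eq_bot_or_eq_maximalIdeal_or_eq_top hm hsq
  have : IsPrincipalIdealRing R := ⟨fun I => by
    rcases hideals I with rfl | rfl | rfl
    exacts [bot_isPrincipal, hm ▸ ⟨2, rfl⟩, top_isPrincipal]⟩
  refine Module.Baer.injective (Module.Baer.self_of_annihilator_annihilator_le fun I => ?_)
  rcases hideals I with rfl | rfl | rfl
  · rw [annihilator_bot, annihilator_top, Module.annihilator_eq_bot.mpr inferInstance]
  · simp only [annihilator_maximalIdeal_of_sq_eq_bot hne hsq, le_refl]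
  · exact le_top
end

section
/- Let T be a triangulated category and E an object fitting into an exact triangle E →n E →n E →h ΣE for some integer n. If E is nonzero, then n ≡ 2 mod 4 and 4·1_E = 0. -/
/-!
From the distinguished triangle `E --n--> E --n--> E --h--> E⟦1⟧`: consecutive maps compose to
zero, so `n² • 𝟙 E = 0`. Comparing the triangle with its rotation along `(𝟙, 𝟙)` gives `c` with
`n • c = h = -(n • c)`, so `2 • h = 0`; by exactness, every `x` out of `E` killed by `n` factors
through `h` and is therefore killed by `2`. Applied to `n • 𝟙 E` and then to `2 • 𝟙 E` this gives
`4 • 𝟙 E = 0`. If `n • 𝟙 E = 0`, exactness at the other end writes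
`𝟙 E = n • y = (n • 𝟙 E) ≫ y = 0`. So the additive order of `𝟙 E` divides `4` and `n²` but not
`n`, which forces `n ≡ 2 mod 4`.
-/

open CategoryTheory Limits Pretriangulated

theorem Int.emod_four_eq_two_of_dvd_mul_self {d n : ℤ} (h4 : d ∣ 4) (hsq : d ∣ n * n)
    (hn : ¬ d ∣ n) : n % 4 = 2 := by
  by_contra hne
  apply hn
  rcases Int.emod_two_eq_zero_or_one n with heven | hodd
  · exact h4.trans (Int.dvd_of_emod_eq_zero (by omega))
  · obtain ⟨m, rfl⟩ : ∃ m, n = 2 * m + 1 := ⟨n / 2, by omega⟩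
    have hcomb : 2 * m + 1 = (2 * m + 1) * ((2 * m + 1) * (2 * m + 1))
        - 4 * ((m * m + m) * (2 * m + 1)) := by ring
    rw [hcomb]
    exact dvd_sub (hsq.mul_left _) (h4.mul_right _)

namespace CategoryTheory.Pretriangulated

variable {C : Type*} [Category C] [Preadditive C] [HasZeroObject C] [HasShift C ℤ]
  [∀ n : ℤ, (shiftFunctor C n).Additive] [Pretriangulated C]
  {E : C} {n : ℤ} {h : E ⟶ E⟦(1 : ℤ)⟧} (hT : Triangle.mk (n • 𝟙 E) (n • 𝟙 E) h ∈ distTriang C)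
include hT

lemma mul_self_zsmul_id_eq_zero_of_distTriang : (n * n) • 𝟙 E = 0 := by
  have hcomp : (n • 𝟙 E) ≫ (n • 𝟙 E) = 0 := comp_distTriang_mor_zero₁₂ _ hT
  simpa [Preadditive.zsmul_comp, smul_smul] using hcomp

lemma two_zsmul_mor₃_eq_zero_of_distTriang : (2 : ℤ) • h = 0 := by
  obtain ⟨c, hc₂, hc₃⟩ := complete_distinguished_triangle_morphism _ _ hT
    (rot_of_distTriang _ hT) (𝟙 E) (𝟙 E) (show (n • 𝟙 E) ≫ 𝟙 E = 𝟙 E ≫ (n • 𝟙 E) by simp)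
  change E ⟶ E⟦(1 : ℤ)⟧ at c
  have hnc : n • c = h := by
    change (n • 𝟙 E) ≫ c = 𝟙 E ≫ h at hc₂
    simpa [Preadditive.zsmul_comp] using hc₂
  have hnc' : h = -(n • c) := by
    change h ≫ (𝟙 E)⟦(1 : ℤ)⟧' = c ≫ (-(n • 𝟙 E)⟦(1 : ℤ)⟧') at hc₃
    simpa [Functor.map_zsmul, Preadditive.comp_zsmul] using hc₃
  calc (2 : ℤ) • h = n • c + h := by rw [two_zsmul, hnc]
    _ = 0 := by rw [hnc', add_neg_cancel]

lemma two_zsmul_eq_zero_of_zsmul_eq_zero {A : C} {x : E ⟶ A} (hx : n • x = 0) :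
    (2 : ℤ) • x = 0 := by
  obtain ⟨g, hg⟩ := Triangle.yoneda_exact₃ _ hT x
    (show (n • 𝟙 E) ≫ x = 0 by simpa [Preadditive.zsmul_comp] using hx)
  change E⟦(1 : ℤ)⟧ ⟶ A at g
  change x = h ≫ g at hg
  rw [hg, ← Preadditive.zsmul_comp, two_zsmul_mor₃_eq_zero_of_distTriang hT, zero_comp]

lemma exists_eq_zsmul_of_zsmul_eq_zero {A : C} {x : A ⟶ E} (hx : n • x = 0) :
    ∃ y : A ⟶ E, x = n • y := by
  obtain ⟨y, hy⟩ := Triangle.coyoneda_exact₂ _ hT x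
    (show x ≫ (n • 𝟙 E) = 0 by simpa [Preadditive.comp_zsmul] using hx)
  change A ⟶ E at y
  change x = y ≫ (n • 𝟙 E) at hy
  exact ⟨y, by simpa [Preadditive.comp_zsmul] using hy⟩

lemma four_zsmul_id_eq_zero_of_distTriang : (4 : ℤ) • 𝟙 E = 0 := by
  have h2n : (2 : ℤ) • n • 𝟙 E = 0 := two_zsmul_eq_zero_of_zsmul_eq_zero hT
    (by rw [smul_smul, mul_self_zsmul_id_eq_zero_of_distTriang hT])
  have h4 := two_zsmul_eq_zero_of_zsmul_eq_zero hT (x := (2 : ℤ) • 𝟙 E)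
    (by rw [smul_comm, h2n])
  rwa [smul_smul] at h4

lemma zsmul_id_ne_zero_of_distTriang (hE : ¬ IsZero E) : n • 𝟙 E ≠ 0 := by
  intro hn
  obtain ⟨y, hy⟩ := exists_eq_zsmul_of_zsmul_eq_zero hT (x := 𝟙 E) hn
  refine hE ((IsZero.iff_id_eq_zero E).mpr ?_)
  calc 𝟙 E = n • y := hy
    _ = (n • 𝟙 E) ≫ y := by rw [Preadditive.zsmul_comp, Category.id_comp]
    _ = 0 := by rw [hn, zero_comp]

end CategoryTheory.Pretriangulated

/-- Let `T` be a triangulated category and `E` an object fitting into an exact triangle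
`E →n E →n E →h ΣE` for an integer `n`.  If `E` is nonzero, then `n ≡ 2 mod 4` and
`4 · 1_E = 0`. -/
theorem stmt_9 {C : Type*} [Category C] [Preadditive C] [HasZeroObject C]
    [HasShift C ℤ] [∀ n : ℤ, (shiftFunctor C n).Additive] [Pretriangulated C]
    [IsTriangulated C]
    (E : C) (n : ℤ) (h : E ⟶ E⟦(1 : ℤ)⟧)
    (hT : Triangle.mk (n • 𝟙 E) (n • 𝟙 E) h ∈ distTriang C)
    (hE : ¬ IsZero E) :
    n % 4 = 2 ∧ (4 : ℤ) • 𝟙 E = 0 := by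
  have h4 := four_zsmul_id_eq_zero_of_distTriang hT
  refine ⟨Int.emod_four_eq_two_of_dvd_mul_self (d := addOrderOf (𝟙 E)) ?_ ?_ ?_, h4⟩
  · exact addOrderOf_dvd_iff_zsmul_eq_zero.mpr h4
  · exact addOrderOf_dvd_iff_zsmul_eq_zero.mpr (mul_self_zsmul_id_eq_zero_of_distTriang hT)
  · rw [addOrderOf_dvd_iff_zsmul_eq_zero]
    exact zsmul_id_ne_zero_of_distTriang hT hE
end

section
/- Let T be a triangulated category and E an object with an exact triangle E →2 E →2 E →h ΣE. Then h = 2ψ for some isomorphism ψ : E → ΣE, and 4·1_E = 0. -/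
/-!
Rotating the triangle `E →2 E →2 E →h ΣE` gives `E →2 E →h ΣE →-2 ΣE`, and the identities on the
first two vertices extend to a morphism between these distinguished triangles; its third component
`ψ` is an isomorphism by the five lemma. The two commuting squares through `ψ` read `h = 2ψ` and
`h = -2ψ`, so `4ψ = 0`, and since `ψ` is invertible, `4 · 1_E = 0`.
-/

open CategoryTheory Limits Pretriangulated

namespace CategoryTheory.Pretriangulated

variable {C : Type*} [Category C] [Preadditive C] [HasZeroObject C] [HasShift C ℤ]
  [∀ n : ℤ, (shiftFunctor C n).Additive] [Pretriangulated C]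

theorem exists_isIso_of_mk_self_mem_distTriang {X : C} (f : X ⟶ X) (h : X ⟶ X⟦(1 : ℤ)⟧)
    (hT : Triangle.mk f f h ∈ distTriang C) :
    ∃ ψ : X ⟶ X⟦(1 : ℤ)⟧, IsIso ψ ∧ f ≫ ψ = h ∧ h = -(ψ ≫ f⟦(1 : ℤ)⟧') := by
  have hT' := rot_of_distTriang _ hT
  have comm₁ : f ≫ 𝟙 X = 𝟙 X ≫ f := (Category.comp_id _).trans (Category.id_comp _).symm
  obtain ⟨ψ, comm₂, comm₃⟩ := complete_distinguished_triangle_morphism _ _ hT hT' _ _ comm₁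
  have hψ : IsIso ψ := isIso₃_of_isIso₁₂ ⟨𝟙 X, 𝟙 X, ψ, comm₁, comm₂, comm₃⟩ hT hT'
    (inferInstanceAs (IsIso (𝟙 X))) (inferInstanceAs (IsIso (𝟙 X)))
  dsimp only [Triangle.mk, Triangle.rotate] at comm₂ comm₃
  refine ⟨ψ, hψ, comm₂.trans (Category.id_comp h), ?_⟩
  simp only [Functor.map_id, Category.comp_id] at comm₃
  exact comm₃.trans (Preadditive.comp_neg _ _)

theorem exists_isIso_of_zsmul_id_mem_distTriang {X : C} (n : ℤ) (h : X ⟶ X⟦(1 : ℤ)⟧)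
    (hT : Triangle.mk (n • 𝟙 X) (n • 𝟙 X) h ∈ distTriang C) :
    ∃ ψ : X ⟶ X⟦(1 : ℤ)⟧, IsIso ψ ∧ h = n • ψ ∧ h = -(n • ψ) := by
  obtain ⟨ψ, hψ, h₁, h₂⟩ := exists_isIso_of_mk_self_mem_distTriang _ h hT
  exact ⟨ψ, hψ, by simpa using h₁.symm, by simpa [Functor.map_zsmul] using h₂⟩

end CategoryTheory.Pretriangulated

theorem CategoryTheory.zsmul_id_eq_zero_of_isIso {C : Type*} [Category C] [Preadditive C]
    {X Y : C} (ψ : X ⟶ Y) [IsIso ψ] {n : ℤ} (hn : n • ψ = 0) : n • 𝟙 X = 0 := by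
  simpa using congrArg (· ≫ inv ψ) hn

/-- Let `T` be a triangulated category and `E` an object with an exact triangle
`E →2 E →2 E →h ΣE`.  Then `h = 2ψ` for some isomorphism `ψ : E ⟶ ΣE`, and `4 · 1_E = 0`. -/
theorem stmt_10 {C : Type*} [Category C] [Preadditive C] [HasZeroObject C]
    [HasShift C ℤ] [∀ n : ℤ, (shiftFunctor C n).Additive] [Pretriangulated C]
    [IsTriangulated C]
    (E : C) (h : E ⟶ E⟦(1 : ℤ)⟧)
    (hT : Triangle.mk ((2 : ℤ) • 𝟙 E) ((2 : ℤ) • 𝟙 E) h ∈ distTriang C) :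
    (∃ ψ : E ⟶ E⟦(1 : ℤ)⟧, IsIso ψ ∧ h = (2 : ℤ) • ψ) ∧ (4 : ℤ) • 𝟙 E = 0 := by
  obtain ⟨ψ, hψ, h_eq, h_eq_neg⟩ := exists_isIso_of_zsmul_id_mem_distTriang 2 h hT
  have four_ψ : (4 : ℤ) • ψ = 0 := by
    rw [show (4 : ℤ) = 2 + 2 by norm_num, add_smul, ← eq_neg_iff_add_eq_zero]
    exact h_eq.symm.trans h_eq_neg
  exact ⟨⟨ψ, hψ, h_eq⟩, zsmul_id_eq_zero_of_isIso ψ four_ψ⟩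
end

section
/- Let T be a triangulated category, A a hopfian object and E an exotic object. Then T(A, E) = 0. -/
/-!
Fix the triangles `A →2 A →i Cone →q ΣA` with `q ≫ η ≫ i = 2` and `E →2 E →2 E →h ΣE`.
A morphism `g : A ⟶ E` extends to a morphism of triangles with third component `φ`, and
`2φ = q ≫ η ≫ i ≫ φ = q ≫ (2η) ≫ g = 0`. So `φ` factors through `2 : E ⟶ E`, whence `φ ≫ h = 0`
because `2h = 0`; thus `q ≫ Σg = 0`, i.e. `g` is divisible by `2`. Applying this twice writes
`f = 4w`, and `4 · 𝟙 E = 0`.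
-/

open CategoryTheory Limits Pretriangulated

variable {C : Type*} [Category C] [Preadditive C] [HasZeroObject C]
  [HasShift C ℤ] [∀ n : ℤ, (shiftFunctor C n).Additive] [Pretriangulated C]
  [IsTriangulated C]

/-- A Hopf map for `A`: a morphism `η : ΣA ⟶ A` with `2η = 0` such that for some exact
triangle `A →2 A →i C →q ΣA` one has `iηq = 2·1_C`. -/
def IsHopfMap (A : C) (η : A⟦(1 : ℤ)⟧ ⟶ A) : Prop :=
  (2 : ℤ) • η = 0 ∧
  ∃ (Cone : C) (i : A ⟶ Cone) (q : Cone ⟶ A⟦(1 : ℤ)⟧),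
    Triangle.mk ((2 : ℤ) • 𝟙 A) i q ∈ (distTriang C) ∧
      q ≫ η ≫ i = (2 : ℤ) • 𝟙 Cone

/-- An object admitting a Hopf map. -/
def IsHopfian (A : C) : Prop := ∃ η : A⟦(1 : ℤ)⟧ ⟶ A, IsHopfMap A η

/-- An exotic object: one fitting in an exact triangle `E →2 E →2 E →h ΣE`. -/
def IsExotic (E : C) : Prop :=
  ∃ h : E ⟶ E⟦(1 : ℤ)⟧,
    Triangle.mk ((2 : ℤ) • 𝟙 E) ((2 : ℤ) • 𝟙 E) h ∈ distTriang C

omit [IsTriangulated C] in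
lemma Triangle.yoneda_exact₁ (T : Triangle C) (hT : T ∈ distTriang C) {X : C}
    (f : T.obj₁ ⟶ X) (hf : T.mor₃ ≫ f⟦(1 : ℤ)⟧' = 0) : ∃ g : T.obj₂ ⟶ X, f = T.mor₁ ≫ g := by
  obtain ⟨w, hw⟩ : ∃ w : T.obj₂⟦(1 : ℤ)⟧ ⟶ X⟦(1 : ℤ)⟧, f⟦(1 : ℤ)⟧' = (-T.mor₁⟦(1 : ℤ)⟧') ≫ w :=
    Triangle.yoneda_exact₃ _ (rot_of_distTriang _ hT) _ hf
  refine ⟨(shiftFunctor C (1 : ℤ)).preimage (-w), (shiftFunctor C (1 : ℤ)).map_injective ?_⟩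
  rw [Functor.map_comp, Functor.map_preimage, hw, Preadditive.neg_comp, Preadditive.comp_neg]

omit [IsTriangulated C] in
lemma exists_eq_zsmul_of_comp_shift_eq_zero {A Y X : C} {n : ℤ} {i : A ⟶ Y}
    {q : Y ⟶ A⟦(1 : ℤ)⟧} (hT : Triangle.mk (n • 𝟙 A) i q ∈ distTriang C) (g : A ⟶ X)
    (hg : q ≫ g⟦(1 : ℤ)⟧' = 0) : ∃ v : A ⟶ X, g = n • v := by
  obtain ⟨v, hv⟩ : ∃ v : A ⟶ X, g = (n • 𝟙 A) ≫ v := Triangle.yoneda_exact₁ _ hT g hg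
  exact ⟨v, by rw [hv, Preadditive.zsmul_comp, Category.id_comp]⟩

section ZSMulTriangle

variable {E : C} {n : ℤ} {h : E ⟶ E⟦(1 : ℤ)⟧}

omit [IsTriangulated C] in
lemma mul_zsmul_id_eq_zero_of_distTriang
    (hT : Triangle.mk (n • 𝟙 E) (n • 𝟙 E) h ∈ distTriang C) : (n * n) • 𝟙 E = 0 := by
  have h0 : (n • 𝟙 E) ≫ (n • 𝟙 E) = 0 := comp_distTriang_mor_zero₁₂ _ hT
  rwa [Preadditive.zsmul_comp, Category.id_comp, smul_smul] at h0

omit [IsTriangulated C] in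
lemma zsmul_mor₃_eq_zero_of_distTriang
    (hT : Triangle.mk (n • 𝟙 E) (n • 𝟙 E) h ∈ distTriang C) : n • h = 0 := by
  have h0 : (n • 𝟙 E) ≫ h = 0 := comp_distTriang_mor_zero₂₃ _ hT
  rwa [Preadditive.zsmul_comp, Category.id_comp] at h0

omit [IsTriangulated C] in
lemma comp_mor₃_eq_zero_of_zsmul_eq_zero
    (hT : Triangle.mk (n • 𝟙 E) (n • 𝟙 E) h ∈ distTriang C) {Y : C} {φ : Y ⟶ E}
    (hφ : n • φ = 0) : φ ≫ h = 0 := by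
  obtain ⟨ψ, rfl⟩ : ∃ ψ : Y ⟶ E, φ = ψ ≫ (n • 𝟙 E) := Triangle.coyoneda_exact₂ _ hT φ
    (show φ ≫ (n • 𝟙 E) = 0 by rwa [Preadditive.comp_zsmul, Category.comp_id])
  rw [Category.assoc, Preadditive.zsmul_comp, Category.id_comp,
    zsmul_mor₃_eq_zero_of_distTriang hT, comp_zero]

end ZSMulTriangle

omit [IsTriangulated C] in
lemma exists_eq_zsmul_of_hopf_of_exotic {A Cone E : C} {n : ℤ} {η : A⟦(1 : ℤ)⟧ ⟶ A}
    {i : A ⟶ Cone} {q : Cone ⟶ A⟦(1 : ℤ)⟧} {h : E ⟶ E⟦(1 : ℤ)⟧} (hη : n • η = 0)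
    (hTA : Triangle.mk (n • 𝟙 A) i q ∈ distTriang C) (hqi : q ≫ η ≫ i = n • 𝟙 Cone)
    (hTE : Triangle.mk (n • 𝟙 E) (n • 𝟙 E) h ∈ distTriang C) (g : A ⟶ E) :
    ∃ v : A ⟶ E, g = n • v := by
  have hg : (n • 𝟙 A) ≫ g = g ≫ (n • 𝟙 E) := by
    rw [Preadditive.zsmul_comp, Preadditive.comp_zsmul, Category.id_comp, Category.comp_id]
  obtain ⟨φ, hiφ, hqφ⟩ : ∃ φ : Cone ⟶ E, i ≫ φ = g ≫ (n • 𝟙 E) ∧ q ≫ g⟦(1 : ℤ)⟧' = φ ≫ h :=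
    complete_distinguished_triangle_morphism _ _ hTA hTE g g hg
  have hnφ : n • φ = 0 := calc
    n • φ = (q ≫ η ≫ i) ≫ φ := by rw [hqi, Preadditive.zsmul_comp, Category.id_comp]
    _ = q ≫ η ≫ g ≫ (n • 𝟙 E) := by rw [Category.assoc, Category.assoc, hiφ]
    _ = q ≫ (n • η) ≫ g := by
      rw [Preadditive.comp_zsmul, Category.comp_id, Preadditive.zsmul_comp, Preadditive.comp_zsmul]
    _ = 0 := by rw [hη, zero_comp, comp_zero]
  exact exists_eq_zsmul_of_comp_shift_eq_zero hTA g
    (hqφ.trans (comp_mor₃_eq_zero_of_zsmul_eq_zero hTE hnφ))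

/-- If `A` is hopfian and `E` is exotic, then every morphism `A ⟶ E` is zero. -/
theorem stmt_12 (A E : C) (hA : IsHopfian A) (hE : IsExotic E) (f : A ⟶ E) : f = 0 := by
  obtain ⟨η, hη, Cone, i, q, hTA, hqi⟩ := hA
  obtain ⟨h, hTE⟩ := hE
  obtain ⟨v, rfl⟩ := exists_eq_zsmul_of_hopf_of_exotic hη hTA hqi hTE f
  obtain ⟨w, rfl⟩ := exists_eq_zsmul_of_hopf_of_exotic hη hTA hqi hTE v
  rw [smul_smul, ← Category.comp_id w, ← Preadditive.comp_zsmul,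
    mul_zsmul_id_eq_zero_of_distTriang hTE, comp_zero]
end

section
/- In any triangulated category, an object that is both hopfian and exotic is a zero object. -/
/-!
The Hopf identity `q ≫ η ≫ i = 2 • 𝟙` holds for every cone of `2 • 𝟙 A`, since all cones are
isomorphic under `A`. Applied to the exotic triangle, where `i = 2 • 𝟙 A`, its left side becomes
`h ≫ 2 • η = 0`, so `2 • 𝟙 A = 0`. The exotic triangle then has vanishing first two maps, which
forces its middle term `A` to be zero.
-/

open CategoryTheory Limits Pretriangulated

variable {C : Type*} [Category C] [Preadditive C] [HasZeroObject C]
  [HasShift C ℤ] [∀ n : ℤ, (shiftFunctor C n).Additive] [Pretriangulated C]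
  [IsTriangulated C]

section

omit [IsTriangulated C]

/-- Two cones of `f` are isomorphic by some `φ` with `i' ≫ φ = i` and `q' = φ ≫ q`, and `φ`
conjugates one composite into the other. -/
lemma mor₃_comp_comp_mor₂_eq_smul_id_of_distTriang {X Y : C} {f : X ⟶ Y} {Z Z' : C}
    {i : Y ⟶ Z} {q : Z ⟶ X⟦(1 : ℤ)⟧} {i' : Y ⟶ Z'} {q' : Z' ⟶ X⟦(1 : ℤ)⟧}
    (hT : Triangle.mk f i q ∈ distTriang C) (hT' : Triangle.mk f i' q' ∈ distTriang C)
    (η : X⟦(1 : ℤ)⟧ ⟶ Y) (n : ℤ) (h : q ≫ η ≫ i = n • 𝟙 Z) :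
    q' ≫ η ≫ i' = n • 𝟙 Z' := by
  obtain ⟨e, he₁, he₂⟩ := exists_iso_of_arrow_iso _ _ hT' hT (Iso.refl _)
  let φ : Z' ⟶ Z := e.hom.hom₃
  let ψ : Z ⟶ Z' := e.inv.hom₃
  have hi : i' ≫ φ = i := by
    have comm : i' ≫ φ = 𝟙 Y ≫ i := by
      have comm := e.hom.comm₂; rw [he₂] at comm; exact comm
    rwa [Category.id_comp] at comm
  have hq : q' = φ ≫ q := by
    have comm : q' ≫ (𝟙 X)⟦(1 : ℤ)⟧' = φ ≫ q := by
      have comm := e.hom.comm₃; rw [he₁] at comm; exact comm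
    rwa [CategoryTheory.Functor.map_id, Category.comp_id] at comm
  have hφψ : φ ≫ ψ = 𝟙 Z' := e.hom_inv_id_triangle_hom₃
  calc q' ≫ η ≫ i' = φ ≫ (q ≫ η ≫ i) ≫ ψ := by
        rw [hq, ← hi]; simp [hφψ]
    _ = n • 𝟙 Z' := by rw [h, ← hφψ]; simp

lemma IsHopfian.two_smul_id_eq_zero_of_isExotic {A : C} (hA : IsHopfian A) (hE : IsExotic A) :
    (2 : ℤ) • 𝟙 A = 0 := by
  obtain ⟨η, hη, _, _, _, hT, hqi⟩ := hA
  obtain ⟨h, hTe⟩ := hE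
  rw [← mor₃_comp_comp_mor₂_eq_smul_id_of_distTriang hT hTe η 2 hqi]
  simp [hη]

end

/-- An object that is both hopfian and exotic is a zero object. -/
theorem stmt_13 (A : C) (hA : IsHopfian A) (hE : IsExotic A) : IsZero A := by
  obtain ⟨h, hTe⟩ := hE
  rw [hA.two_smul_id_eq_zero_of_isExotic ⟨h, hTe⟩] at hTe
  exact (Triangle.isZero₂_iff _ hTe).2 ⟨rfl, rfl⟩
end

section
/- Let A = k⟨a,u,v,v⁻¹⟩/(a², au+ua+1, av+va, uv+vu) be the dg algebra over a field k with |a|=|u|=0, |v|=−1, differential d(a)=u²v, d(u)=d(v)=0. For any dg A-module M, the k[ε]/ε²-module H₀(M) (where ε acts by [u]) is such that every homology class annihilated by ε is divisible by ε. -/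
/-- Let `A = k⟨a,u,v,v⁻¹⟩/(a², au+ua+1, av+va, uv+vu)` be the dg algebra over a field `k`
with `|a| = |u| = 0`, `|v| = −1`, differential `d(a) = u²v`, `d(u) = d(v) = 0`.  For any
dg (right) `A`-module `M`, every degree-zero homology class annihilated by `ε = [u]` is
divisible by `ε`: if `x` is a degree-`0` cycle with `x·u` a boundary, then
`x = z·u + D(w)` for some degree-`0` cycle `z`. -/
theorem stmt_18 (k : Type*) [Field k]
    -- the graded algebra `A` with its differential
    (A : Type*) [Ring A] [Algebra k A] (𝒜 : ℤ → Submodule k A) [GradedAlgebra 𝒜]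
    (d : A →ₗ[k] A)
    (hd_deg : ∀ (n : ℤ) (x : A), x ∈ 𝒜 n → d x ∈ 𝒜 (n - 1))
    (hdd : ∀ x : A, d (d x) = 0)
    (hLeibniz : ∀ (m n : ℤ) (x y : A), x ∈ 𝒜 m → y ∈ 𝒜 n →
      d (x * y) = d x * y + ((-1 : k) ^ m) • (x * d y))
    -- the generators of `A`, their degrees, the relations, and the differential
    (a u v vinv : A)
    (ha : a ∈ 𝒜 0) (hu : u ∈ 𝒜 0) (hv : v ∈ 𝒜 (-1)) (hvinv : vinv ∈ 𝒜 1)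
    (rel₁ : a * a = 0) (rel₂ : a * u + u * a = -1)
    (rel₃ : a * v + v * a = 0) (rel₄ : u * v + v * u = 0)
    (hv_unit : v * vinv = 1) (hv_unit' : vinv * v = 1)
    (hda : d a = u * u * v) (hdu : d u = 0) (hdv : d v = 0)
    -- a dg right `A`-module `M`, with right action `act`
    (M : Type*) [AddCommGroup M] [Module k M]
    (ℳ : ℤ → Submodule k M) [DirectSum.Decomposition ℳ]
    (act : M →ₗ[k] A →ₗ[k] M)
    (h_one : ∀ m : M, act m 1 = m)
    (h_mul : ∀ (m : M) (x y : A), act (act m x) y = act m (x * y))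
    (h_grade : ∀ (i j : ℤ) (m : M) (x : A), m ∈ ℳ i → x ∈ 𝒜 j → act m x ∈ ℳ (i + j))
    (D : M →ₗ[k] M)
    (hD_deg : ∀ (i : ℤ) (m : M), m ∈ ℳ i → D m ∈ ℳ (i - 1))
    (hDD : ∀ m : M, D (D m) = 0)
    (hMLeibniz : ∀ (i : ℤ) (m : M) (x : A), m ∈ ℳ i →
      D (act m x) = act (D m) x + ((-1 : k) ^ i) • act m (d x))
    -- the claim
    (x : M) (hx0 : x ∈ ℳ 0) (hxcycle : D x = 0)
    (hxu : ∃ y : M, y ∈ ℳ 1 ∧ D y = act x u) :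
    ∃ z w : M, z ∈ ℳ 0 ∧ D z = 0 ∧ w ∈ ℳ 1 ∧ x = act z u + D w := by
  obtain ⟨y, hy1, hDy⟩ := hxu
  have hvu : v * u = -(u * v) := eq_neg_of_add_eq_zero_right rel₄
  have hau : a * u = -1 - u * a := eq_sub_of_add_eq rel₂
  have hduv : d (u * v) = 0 := by
    rw [hLeibniz 0 (-1) u v hu hv, hdu, hdv, mul_zero, zero_mul, smul_zero, add_zero]
  refine ⟨act y (u * v) - act x a, -(act y a), ?_, ?_, ?_, ?_⟩
  · have h1 := h_grade 1 (-1) y (u * v) hy1 (by simpa using SetLike.mul_mem_graded hu hv)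
    have h2 := h_grade 0 0 x a hx0 ha
    norm_num at h1 h2
    exact Submodule.sub_mem _ h1 h2
  · have e1 : D (act y (u * v)) = act (act x u) (u * v) := by
      rw [hMLeibniz 1 y (u * v) hy1, hduv, hDy]
      simp
    have e2 : D (act x a) = act x (u * u * v) := by
      rw [hMLeibniz 0 x a hx0, hxcycle, hda]
      simp
    rw [map_sub, e1, e2, h_mul, mul_assoc, sub_self]
  · have h1 := h_grade 1 0 y a hy1 ha
    norm_num at h1
    exact Submodule.neg_mem _ h1
  · have hDya : D (act y a) = act (act x u) a - act y (u * u * v) := by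
      rw [hMLeibniz 1 y a hy1, hda, hDy, zpow_one, neg_smul, one_smul, sub_eq_add_neg]
    have hzu : act (act y (u * v) - act x a) u
        = -(act y (u * u * v)) + x + act (act x u) a := by
      rw [map_sub, LinearMap.sub_apply, h_mul, h_mul, mul_assoc, hvu, mul_neg,
        ← mul_assoc, map_neg, hau]
      have : act x (-1 - u * a) = -x - act (act x u) a := by
        rw [map_sub, map_neg, h_one, h_mul]
      rw [this]
      abel
    rw [hzu, map_neg, hDya]
    abel
end
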